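/- arXiv:math/0407428 — 3 statements merged into one kernel-verified Lean document; each statement's English description precedes it below -/
import Mathlib

section
/- For all real numbers x, y with 0 ≤ x ≤ 1 and 0 ≤ y ≤ 1, min{x,y} = 8 · ∑_{n ≥ 1, n odd} sin(nπx/2)·sin(nπy/2) / (π²n²). -/
open Real

/-!
By the product-to-sum formula the series is a difference of two values of the odd part of
`∑ cos (n π t / 2) / n²`. Evaluating the Bernoulli series `∑ cos (2 π n t) / n² = π² (t² - t + 1/6)`
at `t / 4` and subtracting its even-indexed terms (the same series at `t / 2`) shows that this odd
part equals `π² (1 - |t|) / 8` for `|t| ≤ 2`. At `t = x - y` and `t = x + y` the difference is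
`π² (x + y - |x - y|) / 8 = π² min x y / 4`.
-/

theorem hasSum_subtype_odd_of_hasSum_even {G : Type*} [AddCommGroup G] [TopologicalSpace G]
    [IsTopologicalAddGroup G] {f : ℕ → G} {a b : G} (hf : HasSum f a)
    (heven : HasSum (fun n ↦ f (2 * n)) b) :
    HasSum (fun n : {n : ℕ // Odd n} ↦ f n) (a - b) := by
  have heven' : HasSum ({n | Even n}.indicator f) b := by
    rw [← (mul_right_injective₀ (two_ne_zero' ℕ)).hasSum_iff]
    · simpa [Function.comp_def] using heven
    · intro n hn
      apply Set.indicator_of_notMem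
      rintro ⟨k, rfl⟩
      exact hn ⟨k, two_mul k⟩
  have hodd : HasSum ({n | Even n}ᶜ.indicator f) (a - b) := by
    rw [Set.indicator_compl]
    exact hf.sub heven'
  have hcompl : {n : ℕ | Even n}ᶜ = {n | Odd n} := by ext n; simp
  rwa [hcompl, ← hasSum_subtype_iff_indicator] at hodd

theorem hasSum_cos_div_nat_sq {t : ℝ} (ht : t ∈ Set.Icc (0 : ℝ) 1) :
    HasSum (fun n : ℕ ↦ cos (2 * π * n * t) / n ^ 2) (π ^ 2 * (t ^ 2 - t + 1 / 6)) := by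
  convert hasSum_one_div_nat_pow_mul_cos one_ne_zero ht using 1
  · ext n
    rw [mul_one, one_div_mul_eq_div]
  · norm_num [Polynomial.bernoulli, Finset.sum_range_succ, bernoulli]
    ring

theorem hasSum_odd_cos_div_nat_sq {t : ℝ} (ht : t ∈ Set.Icc (0 : ℝ) 2) :
    HasSum (fun n : {n : ℕ // Odd n} ↦ cos (n * π * t / 2) / (n : ℕ) ^ 2)
      (π ^ 2 * (1 - t) / 8) := by
  obtain ⟨ht0, ht2⟩ := ht
  have hall : HasSum (fun n : ℕ ↦ cos (n * π * t / 2) / n ^ 2)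
      (π ^ 2 * ((t / 4) ^ 2 - t / 4 + 1 / 6)) := by
    refine (hasSum_cos_div_nat_sq (t := t / 4) ⟨by linarith, by linarith⟩).congr_fun fun n ↦ ?_
    ring_nf
  have heven : HasSum (fun n : ℕ ↦ cos ((2 * n : ℕ) * π * t / 2) / (2 * n : ℕ) ^ 2)
      (π ^ 2 * ((t / 2) ^ 2 - t / 2 + 1 / 6) / 4) := by
    refine ((hasSum_cos_div_nat_sq (t := t / 2) ⟨by linarith, by linarith⟩).div_const 4).congr_fun
      fun n ↦ ?_
    push_cast
    ring_nf
  have hodd := hasSum_subtype_odd_of_hasSum_even hall heven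
  rwa [show π ^ 2 * ((t / 4) ^ 2 - t / 4 + 1 / 6) - π ^ 2 * ((t / 2) ^ 2 - t / 2 + 1 / 6) / 4
    = π ^ 2 * (1 - t) / 8 by ring] at hodd

theorem hasSum_odd_cos_div_nat_sq_of_abs_le {t : ℝ} (ht : |t| ≤ 2) :
    HasSum (fun n : {n : ℕ // Odd n} ↦ cos (n * π * t / 2) / (n : ℕ) ^ 2)
      (π ^ 2 * (1 - |t|) / 8) := by
  convert hasSum_odd_cos_div_nat_sq ⟨abs_nonneg t, ht⟩ using 3 with n
  rcases abs_cases t with ⟨h, -⟩ | ⟨h, -⟩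
  · rw [h]
  · rw [h, ← cos_neg]; ring_nf

theorem min_eq_fourier_series (x y : ℝ) (hx : x ∈ Set.Icc (0:ℝ) 1)
    (hy : y ∈ Set.Icc (0:ℝ) 1) :
    min x y = 8 * ∑' n : {n : ℕ // Odd n},
      Real.sin ((n : ℕ) * Real.pi * x / 2) * Real.sin ((n : ℕ) * Real.pi * y / 2)
        / (Real.pi ^ 2 * (n : ℕ) ^ 2) := by
  obtain ⟨hx0, hx1⟩ := hx
  obtain ⟨hy0, hy1⟩ := hy
  have hsub := hasSum_odd_cos_div_nat_sq_of_abs_le (t := x - y)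
    (abs_le.2 ⟨by linarith, by linarith⟩)
  have hadd := hasSum_odd_cos_div_nat_sq_of_abs_le (t := x + y)
    (abs_le.2 ⟨by linarith, by linarith⟩)
  have hsum := (hsub.sub hadd).div_const (2 * π ^ 2)
  have hmin : min x y + max x y = x + y := min_add_max x y
  have habs : max x y - min x y = |x - y| := max_sub_min_eq_abs' x y
  rw [abs_of_nonneg (by linarith : 0 ≤ x + y)] at hsum
  rw [(hsum.congr_fun ?_).tsum_eq]
  · field_simp
    linarith
  intro n
  have h := two_mul_sin_mul_sin (n * π * x / 2) (n * π * y / 2)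
  rw [show (n : ℝ) * π * x / 2 - n * π * y / 2 = n * π * (x - y) / 2 by ring,
    show (n : ℝ) * π * x / 2 + n * π * y / 2 = n * π * (x + y) / 2 by ring] at h
  rw [div_sub_div_same, ← h]
  field_simp
end

section
/- For any finite connected weighted graph G, ∑ over edges e of Lₑ/(Rₑ + Lₑ) = 1 + #E(G) − #V(G), where for each edge e with endpoints y,z, Lₑ is its length (reciprocal of its weight), and Rₑ is the effective resistance between y and z in the graph G with edge e deleted (Rₑ = ∞, with Lₑ/(Rₑ+Lₑ) interpreted as 0, if deleting e disconnects y from z). Here the sum over vertex valences satisfies ∑ₚ nₚ = 2#E(G). -/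
/-!
Let `Q` be the Laplacian and `M = (Q + J)⁻¹` with `J` the all-ones matrix (`Q + J` is invertible
because `G` is connected). Since `QM = 1 - J/n`, `f = M δₑ` solves `Q f = δₑ`, so
`r(e) = δₑ ⬝ M δₑ` is the effective resistance across `e` in `G`. Deleting `e` removes the rank-one
term `wₑ δₑ δₑᵀ` from `Q`, and the parallel law for this rank-one update gives
`Lₑ / (Rₑ + Lₑ) = 1 - wₑ r(e)`; when `e` is a bridge, `Q f = δₑ` forces `wₑ r(e) = 1`, matching
the convention that the term is `0`. Foster's theorem `∑ₑ wₑ r(e) = tr (QM) = n - 1` then gives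
the total `#E - (n - 1)`.
-/

open Classical

/-- The weighted Laplacian matrix of the weight function `w`. -/
def lapMatrix {V : Type} [Fintype V] [DecidableEq V] (w : V → V → ℝ) :
    Matrix V V ℝ :=
  fun i j => if i = j then ∑ k, w i k else -(w i j)

/-- The measure `δ_a - δ_b` as a vector. -/
def dirac {V : Type} [DecidableEq V] (a b : V) : V → ℝ :=
  fun v => (if v = a then 1 else 0) - (if v = b then 1 else 0)

/-- The weight function obtained by deleting the edge `e`. -/
def deleteEdge {V : Type} [DecidableEq V] (w : V → V → ℝ) (e : V × V) :
    V → V → ℝ :=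
  fun i j => if (i = e.1 ∧ j = e.2) ∨ (i = e.2 ∧ j = e.1) then 0 else w i j

open Matrix

section RankOneUpdate

variable {n K : Type*} [Fintype n] [Field K] {A : Matrix n n K} {u f : n → K} {c : K}

theorem mulVec_eq_smul_of_add_smul_vecMulVec_mulVec_eq (hf : (A + c • vecMulVec u u) *ᵥ f = u) :
    A *ᵥ f = (1 - c * (u ⬝ᵥ f)) • u := by
  rw [add_mulVec, smul_mulVec, vecMulVec_mulVec] at hf
  simp only [op_smul_eq_smul, smul_smul] at hf
  rw [sub_smul, one_smul]
  exact eq_sub_of_add_eq hf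

theorem mul_dotProduct_eq_one_of_not_exists_mulVec_eq
    (hf : (A + c • vecMulVec u u) *ᵥ f = u) (h : ¬∃ g, A *ᵥ g = u) : c * (u ⬝ᵥ f) = 1 := by
  by_contra hne
  refine h ⟨(1 - c * (u ⬝ᵥ f))⁻¹ • f, ?_⟩
  rw [mulVec_smul, mulVec_eq_smul_of_add_smul_vecMulVec_mulVec_eq hf, smul_smul,
    inv_mul_cancel₀ (sub_ne_zero.mpr (Ne.symm hne)), one_smul]

theorem inv_div_dotProduct_add_inv_eq (hA : Aᵀ = A) (hc : c ≠ 0)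
    (hf : (A + c • vecMulVec u u) *ᵥ f = u) {g : n → K} (hg : A *ᵥ g = u) :
    c⁻¹ / (u ⬝ᵥ g + c⁻¹) = 1 - c * (u ⬝ᵥ f) := by
  set s := 1 - c * (u ⬝ᵥ f)
  have hker : A *ᵥ (f - s • g) = 0 := by
    rw [mulVec_sub, mulVec_smul, hg, mulVec_eq_smul_of_add_smul_vecMulVec_mulVec_eq hf, sub_self]
  have horth : u ⬝ᵥ (f - s • g) = 0 := by
    rw [← hg, dotProduct_comm, dotProduct_mulVec, ← mulVec_transpose, hA, hker,
      zero_dotProduct]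
  rw [dotProduct_sub, dotProduct_smul, smul_eq_mul] at horth
  have hmul : s * (u ⬝ᵥ g + c⁻¹) = c⁻¹ := by
    linear_combination (-1 : K) * horth - (u ⬝ᵥ f) * mul_inv_cancel₀ hc
  have hden : u ⬝ᵥ g + c⁻¹ ≠ 0 := by
    intro h0
    rw [h0, mul_zero] at hmul
    exact inv_ne_zero hc hmul.symm
  rw [div_eq_iff hden, hmul]

end RankOneUpdate

section AddOnes

variable {n K : Type*} [Fintype n] [DecidableEq n] [Field K]

theorem mul_inv_add_ones {Q : Matrix n n K} (hQ : ∀ j, ∑ i, Q i j = 0)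
    (hN : IsUnit (Q + of fun _ _ => 1).det) (hn : (Fintype.card n : K) ≠ 0) :
    Q * (Q + of fun _ _ => 1)⁻¹ = 1 - (Fintype.card n : K)⁻¹ • of fun _ _ => 1 := by
  set J : Matrix n n K := of fun _ _ => 1
  set N := Q + J
  have hJN : J * N = (Fintype.card n : K) • J := by
    ext i j
    simp [J, N, mul_apply, Finset.sum_add_distrib, hQ]
  have hJM : J * N⁻¹ = (Fintype.card n : K)⁻¹ • J := by
    calc J * N⁻¹ = ((Fintype.card n : K)⁻¹ • (J * N)) * N⁻¹ := by rw [hJN, inv_smul_smul₀ hn]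
      _ = (Fintype.card n : K)⁻¹ • J := by
        rw [smul_mul_assoc, mul_assoc, mul_nonsing_inv N hN, mul_one]
  rw [show Q = N - J by simp [N], sub_mul, mul_nonsing_inv N hN, hJM]

theorem mulVec_inv_add_ones_mulVec {Q : Matrix n n K} (hQ : ∀ j, ∑ i, Q i j = 0)
    (hN : IsUnit (Q + of fun _ _ => 1).det) (hn : (Fintype.card n : K) ≠ 0) {u : n → K}
    (hu : ∑ i, u i = 0) : Q *ᵥ ((Q + of fun _ _ => 1)⁻¹ *ᵥ u) = u := by
  have hJu : (of fun _ _ => 1 : Matrix n n K) *ᵥ u = 0 := by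
    ext
    simp [mulVec, dotProduct, hu]
  rw [mulVec_mulVec, mul_inv_add_ones hQ hN hn, sub_mulVec, one_mulVec, smul_mulVec, hJu,
    smul_zero, sub_zero]

theorem trace_mul_inv_add_ones {Q : Matrix n n K} (hQ : ∀ j, ∑ i, Q i j = 0)
    (hN : IsUnit (Q + of fun _ _ => 1).det) (hn : (Fintype.card n : K) ≠ 0) :
    trace (Q * (Q + of fun _ _ => 1)⁻¹) = (Fintype.card n : K) - 1 := by
  rw [mul_inv_add_ones hQ hN hn, trace_sub, trace_one, trace_smul]
  simp [trace, hn]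

end AddOnes

theorem Finset.sum_sum_eq_two_nsmul_sum_of_orientation {V β : Type*} [Fintype V]
    [AddCommMonoid β] {E : Finset (V × V)} {G : V → V → β} (hG : ∀ i j, G i j = G j i)
    (hE : ∀ e ∈ E, e.swap ∉ E) (hEG : ∀ i j, G i j ≠ 0 → (i, j) ∈ E ∨ (j, i) ∈ E) :
    ∑ i, ∑ j, G i j = 2 • ∑ e ∈ E, G e.1 e.2 := by
  have hdisj : Disjoint E (E.map (Equiv.prodComm V V).toEmbedding) := by
    rw [Finset.disjoint_left]
    intro e he he'
    obtain ⟨e', he'E, rfl⟩ := Finset.mem_map.mp he'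
    exact hE e' he'E he
  have hsupp : ∀ e ∉ E ∪ E.map (Equiv.prodComm V V).toEmbedding, G e.1 e.2 = 0 := by
    intro e he
    by_contra hne
    rcases hEG e.1 e.2 hne with h | h
    · exact he (Finset.mem_union_left _ h)
    · exact he (Finset.mem_union_right _ (Finset.mem_map.mpr ⟨_, h, rfl⟩))
  rw [← Fintype.sum_prod_type', ← Finset.sum_subset (Finset.subset_univ _)
    fun e _ => hsupp e, Finset.sum_union hdisj, Finset.sum_map, two_nsmul]
  simp [hG]

variable {V : Type} [DecidableEq V]

theorem deleteEdge_symm {w : V → V → ℝ} (hsym : ∀ i j, w i j = w j i) (e : V × V) (i j : V) :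
    deleteEdge w e i j = deleteEdge w e j i := by
  unfold deleteEdge
  by_cases h : (i = e.1 ∧ j = e.2) ∨ (i = e.2 ∧ j = e.1)
  · rw [if_pos h, if_pos (by tauto)]
  · rw [if_neg h, if_neg (by tauto), hsym]

variable [Fintype V]

theorem dirac_dotProduct (a b : V) (x : V → ℝ) : dirac a b ⬝ᵥ x = x a - x b := by
  simp [dirac, dotProduct, sub_mul]

theorem mulVec_dirac_apply (P : Matrix V V ℝ) (a b i : V) :
    (P *ᵥ dirac a b) i = P i a - P i b := by
  rw [mulVec, dotProduct_comm, dirac_dotProduct]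

theorem sum_dirac (a b : V) : ∑ v, dirac a b v = 0 := by
  simp [dirac, Finset.sum_sub_distrib]

section Laplacian

variable (w : V → V → ℝ)

theorem lapMatrix_transpose (hsym : ∀ i j, w i j = w j i) : (lapMatrix w)ᵀ = lapMatrix w := by
  ext i j
  by_cases h : i = j
  · subst h; rfl
  · simp [lapMatrix, h, Ne.symm h, hsym i j]

theorem lapMatrix_mulVec_apply (hdiag : ∀ i, w i i = 0) (x : V → ℝ) (i : V) :
    (lapMatrix w *ᵥ x) i = ∑ j, w i j * (x i - x j) := by
  have hrow : ∀ j, lapMatrix w i j * x j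
      = (if i = j then (∑ k, w i k) * x i else 0) - w i j * x j := by
    intro j
    by_cases h : i = j
    · subst h; simp [lapMatrix, hdiag]
    · simp [lapMatrix, h]
  simp only [mulVec, dotProduct, hrow, Finset.sum_sub_distrib, Finset.sum_ite_eq,
    Finset.mem_univ, if_true, mul_sub, Finset.sum_mul]

theorem sum_lapMatrix_apply (hsym : ∀ i j, w i j = w j i) (hdiag : ∀ i, w i i = 0) (j : V) :
    ∑ i, lapMatrix w i j = 0 := by
  have := lapMatrix_mulVec_apply w hdiag (fun _ => 1) j
  rw [← lapMatrix_transpose w hsym] at this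
  simpa [mulVec, dotProduct] using this

theorem trace_lapMatrix_mul (hdiag : ∀ i, w i i = 0) (P : Matrix V V ℝ) :
    trace (lapMatrix w * P) = ∑ i, ∑ j, w i j * (P i i - P j i) := by
  refine Finset.sum_congr rfl fun i _ => ?_
  exact lapMatrix_mulVec_apply w hdiag (fun j => P j i) i

theorem two_mul_trace_lapMatrix_mul (hsym : ∀ i j, w i j = w j i) (hdiag : ∀ i, w i i = 0)
    (P : Matrix V V ℝ) :
    2 * trace (lapMatrix w * P) = ∑ i, ∑ j, w i j * (dirac i j ⬝ᵥ P *ᵥ dirac i j) := by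
  have hswap : ∑ i, ∑ j, w i j * (P i i - P j i) = ∑ i, ∑ j, w i j * (P j j - P i j) := by
    rw [Finset.sum_comm]
    simp only [hsym]
  simp only [dirac_dotProduct, mulVec_dirac_apply]
  rw [trace_lapMatrix_mul w hdiag, two_mul]
  nth_rewrite 2 [hswap]
  rw [← Finset.sum_add_distrib]
  refine Finset.sum_congr rfl fun i _ => ?_
  rw [← Finset.sum_add_distrib]
  exact Finset.sum_congr rfl fun j _ => by ring

theorem two_mul_dotProduct_lapMatrix_mulVec (hsym : ∀ i j, w i j = w j i)
    (hdiag : ∀ i, w i i = 0) (x : V → ℝ) :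
    2 * (x ⬝ᵥ lapMatrix w *ᵥ x) = ∑ i, ∑ j, w i j * (x i - x j) ^ 2 := by
  have := two_mul_trace_lapMatrix_mul w hsym hdiag (vecMulVec x x)
  simp only [mul_vecMulVec, trace_vecMulVec, vecMulVec_mulVec] at this
  simpa [dotProduct_comm x, dirac_dotProduct, sq] using this

theorem lapMatrix_sub (w' : V → V → ℝ) : lapMatrix (w - w') = lapMatrix w - lapMatrix w' := by
  ext i j
  by_cases h : i = j
  · simp [lapMatrix, h, Finset.sum_sub_distrib]
  · simp [lapMatrix, h]; ring

theorem lapMatrix_sub_lapMatrix_deleteEdge (hsym : ∀ i j, w i j = w j i) {e : V × V}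
    (he : e.1 ≠ e.2) :
    lapMatrix w - lapMatrix (deleteEdge w e) =
      w e.1 e.2 • vecMulVec (dirac e.1 e.2) (dirac e.1 e.2) := by
  obtain ⟨a, b⟩ := e
  have hu : w - deleteEdge w (a, b) = fun i k =>
      (if i = a ∧ k = b then w a b else 0) + (if i = b ∧ k = a then w a b else 0) := by
    ext i k
    by_cases h1 : i = a ∧ k = b
    · obtain ⟨rfl, rfl⟩ := h1; simp [deleteEdge, he]
    · by_cases h2 : i = b ∧ k = a
      · obtain ⟨rfl, rfl⟩ := h2; simp [deleteEdge, he, hsym i k]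
      · simp [deleteEdge, h1, h2]
  rw [← lapMatrix_sub, hu]
  ext i j
  by_cases hij : i = j
  · subst hij
    simp [lapMatrix, Finset.sum_add_distrib, ite_and, vecMulVec_apply, dirac]
    by_cases hia : i = a <;> by_cases hib : i = b <;> simp_all
  · simp [lapMatrix, hij, vecMulVec_apply, dirac]
    by_cases hia : i = a <;> by_cases hib : i = b <;> by_cases hja : j = a <;>
      by_cases hjb : j = b <;> simp_all

theorem dotProduct_lapMatrix_mulVec_nonneg (hsym : ∀ i j, w i j = w j i)
    (hnonneg : ∀ i j, 0 ≤ w i j) (hdiag : ∀ i, w i i = 0) (x : V → ℝ) :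
    0 ≤ x ⬝ᵥ lapMatrix w *ᵥ x := by
  have h2 := two_mul_dotProduct_lapMatrix_mulVec w hsym hdiag x
  have : 0 ≤ ∑ i, ∑ j, w i j * (x i - x j) ^ 2 :=
    Finset.sum_nonneg fun i _ => Finset.sum_nonneg fun j _ =>
      mul_nonneg (hnonneg i j) (sq_nonneg _)
  linarith

theorem eq_of_dotProduct_lapMatrix_mulVec_eq_zero (hsym : ∀ i j, w i j = w j i)
    (hnonneg : ∀ i j, 0 ≤ w i j) (hdiag : ∀ i, w i i = 0)
    (hconn : (SimpleGraph.fromRel fun i j => 0 < w i j).Connected) {x : V → ℝ}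
    (hx : x ⬝ᵥ lapMatrix w *ᵥ x = 0) (i j : V) : x i = x j := by
  have hterm : ∀ i j, 0 ≤ w i j * (x i - x j) ^ 2 :=
    fun i j => mul_nonneg (hnonneg i j) (sq_nonneg _)
  have hsum : ∑ i, ∑ j, w i j * (x i - x j) ^ 2 = 0 := by
    rw [← two_mul_dotProduct_lapMatrix_mulVec w hsym hdiag, hx, mul_zero]
  rw [Finset.sum_eq_zero_iff_of_nonneg fun i _ => Finset.sum_nonneg fun j _ => hterm i j] at hsum
  have hedge : ∀ {i j}, 0 < w i j → x i = x j := fun {i j} hij => by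
    have hij0 : w i j * (x i - x j) ^ 2 = 0 :=
      (Finset.sum_eq_zero_iff_of_nonneg fun j _ => hterm i j).mp (hsum i (Finset.mem_univ _)) j
        (Finset.mem_univ _)
    rcases mul_eq_zero.mp hij0 with h | h
    · exact absurd h hij.ne'
    · exact sub_eq_zero.mp (pow_eq_zero_iff two_ne_zero |>.mp h)
  obtain ⟨p⟩ := hconn.preconnected i j
  induction p with
  | nil => rfl
  | cons hadj _ ih => exact (hadj.2.elim hedge fun h => (hedge h).symm).trans ih

theorem isUnit_det_lapMatrix_add_ones (hsym : ∀ i j, w i j = w j i)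
    (hnonneg : ∀ i j, 0 ≤ w i j) (hdiag : ∀ i, w i i = 0)
    (hconn : (SimpleGraph.fromRel fun i j => 0 < w i j).Connected) :
    IsUnit (lapMatrix w + of fun _ _ => 1).det := by
  rw [isUnit_iff_ne_zero, Ne, ← exists_mulVec_eq_zero_iff]
  rintro ⟨x, hx0, hx⟩
  have hquad : x ⬝ᵥ lapMatrix w *ᵥ x + (∑ i, x i) ^ 2 = 0 := by
    rw [← dotProduct_zero x, ← hx, add_mulVec, dotProduct_add]
    simp [mulVec, dotProduct, ← Finset.sum_mul, sq]
  have hL := dotProduct_lapMatrix_mulVec_nonneg w hsym hnonneg hdiag x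
  have hL0 : x ⬝ᵥ lapMatrix w *ᵥ x = 0 := by nlinarith [sq_nonneg (∑ i, x i)]
  have hsum0 : ∑ i, x i = 0 := by nlinarith [sq_nonneg (∑ i, x i)]
  have hconst := eq_of_dotProduct_lapMatrix_mulVec_eq_zero w hsym hnonneg hdiag hconn hL0
  obtain ⟨i⟩ := hconn.nonempty
  refine hx0 (funext fun j => ?_)
  rw [Finset.sum_congr rfl fun j _ => hconst j i] at hsum0
  simp only [Finset.sum_const, Finset.card_univ, nsmul_eq_mul, mul_eq_zero,
    Nat.cast_eq_zero] at hsum0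
  rw [hconst j i, hsum0.resolve_left (Fintype.card_pos_iff.mpr ⟨i⟩).ne', Pi.zero_apply]

theorem canonical_measure_edge_eq (hsym : ∀ i j, w i j = w j i) {e : V × V} (he : e.1 ≠ e.2)
    (hw : w e.1 e.2 ≠ 0) {f : V → ℝ} (hf : lapMatrix w *ᵥ f = dirac e.1 e.2) :
    (if h : ∃ g : V → ℝ, lapMatrix (deleteEdge w e) *ᵥ g = dirac e.1 e.2 then
        (w e.1 e.2)⁻¹ / ((Classical.choose h e.1 - Classical.choose h e.2) + (w e.1 e.2)⁻¹)
      else 0) = 1 - w e.1 e.2 * (dirac e.1 e.2 ⬝ᵥ f) := by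
  rw [← sub_add_cancel (lapMatrix w) (lapMatrix (deleteEdge w e)),
    lapMatrix_sub_lapMatrix_deleteEdge w hsym he, add_comm] at hf
  split_ifs with h
  · rw [← dirac_dotProduct]
    exact inv_div_dotProduct_add_inv_eq (lapMatrix_transpose _ (deleteEdge_symm hsym e)) hw hf
      (Classical.choose_spec h)
  · rw [mul_dotProduct_eq_one_of_not_exists_mulVec_eq hf h, sub_self]

theorem trace_lapMatrix_mul_eq_sum_orientation (hsym : ∀ i j, w i j = w j i)
    (hdiag : ∀ i, w i i = 0) {E : Finset (V × V)} (hE : ∀ e ∈ E, e.swap ∉ E)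
    (hEw : ∀ i j, w i j ≠ 0 → (i, j) ∈ E ∨ (j, i) ∈ E) (P : Matrix V V ℝ) :
    trace (lapMatrix w * P) = ∑ e ∈ E, w e.1 e.2 * (dirac e.1 e.2 ⬝ᵥ P *ᵥ dirac e.1 e.2) := by
  have hG : ∀ i j, w i j * (dirac i j ⬝ᵥ P *ᵥ dirac i j)
      = w j i * (dirac j i ⬝ᵥ P *ᵥ dirac j i) := by
    intro i j
    simp only [dirac_dotProduct, mulVec_dirac_apply, hsym i j]
    ring
  have hEG : ∀ i j, w i j * (dirac i j ⬝ᵥ P *ᵥ dirac i j) ≠ 0 → (i, j) ∈ E ∨ (j, i) ∈ E :=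
    fun i j h => hEw i j (left_ne_zero_of_mul h)
  have := Finset.sum_sum_eq_two_nsmul_sum_of_orientation hG hE hEG
  rw [← two_mul_trace_lapMatrix_mul w hsym hdiag, two_nsmul, ← two_mul] at this
  exact mul_left_cancel₀ two_ne_zero this

end Laplacian

theorem canonical_measure_total_mass
    {V : Type} [Fintype V] [DecidableEq V]
    (w : V → V → ℝ)
    (hsym : ∀ i j, w i j = w j i)
    (hnonneg : ∀ i j, 0 ≤ w i j)
    (hdiag : ∀ i, w i i = 0)
    (hconn : (SimpleGraph.fromRel fun i j => 0 < w i j).Connected)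
    (E : Finset (V × V))
    (hE : ∀ i j : V, 0 < w i j →
      ((i, j) ∈ E ∧ (j, i) ∉ E) ∨ ((j, i) ∈ E ∧ (i, j) ∉ E))
    (hEw : ∀ e ∈ E, 0 < w e.1 e.2)
    (L : V × V → ℝ) (hL : ∀ e ∈ E, L e = 1 / w e.1 e.2) :
    ∑ e ∈ E,
      (if h : ∃ g : V → ℝ,
          (lapMatrix (deleteEdge w e)).mulVec g = dirac e.1 e.2 then
        L e / ((Classical.choose h e.1 - Classical.choose h e.2) + L e)
      else 0)
      = 1 + (E.card : ℝ) - (Fintype.card V : ℝ) := by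
  obtain ⟨v⟩ := hconn.nonempty
  have hn : (Fintype.card V : ℝ) ≠ 0 := Nat.cast_ne_zero.mpr (Fintype.card_pos_iff.mpr ⟨v⟩).ne'
  have hcol := sum_lapMatrix_apply w hsym hdiag
  have hunit := isUnit_det_lapMatrix_add_ones w hsym hnonneg hdiag hconn
  have hswap : ∀ e ∈ E, e.swap ∉ E := fun e he =>
    ((hE e.1 e.2 (hEw e he)).resolve_right fun h => h.2 he).2
  have horient : ∀ i j, w i j ≠ 0 → (i, j) ∈ E ∨ (j, i) ∈ E := fun i j h =>
    (hE i j (lt_of_le_of_ne (hnonneg i j) h.symm)).imp And.left And.left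
  calc _ = ∑ e ∈ E, (1 - w e.1 e.2 *
          (dirac e.1 e.2 ⬝ᵥ (lapMatrix w + of fun _ _ => 1)⁻¹ *ᵥ dirac e.1 e.2)) := by
        refine Finset.sum_congr rfl fun e he => ?_
        have hne : e.1 ≠ e.2 := fun h => (hEw e he).ne' (by rw [h, hdiag])
        rw [hL e he, one_div]
        exact canonical_measure_edge_eq w hsym hne (hEw e he).ne'
          (mulVec_inv_add_ones_mulVec hcol hunit hn (sum_dirac e.1 e.2))
    _ = E.card - trace (lapMatrix w * (lapMatrix w + of fun _ _ => 1)⁻¹) := by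
        rw [Finset.sum_sub_distrib, Finset.sum_const, nsmul_eq_mul, mul_one,
          trace_lapMatrix_mul_eq_sum_orientation w hsym hdiag hswap horient]
    _ = _ := by
        rw [trace_mul_inv_add_ones hcol hunit hn]
        ring
end

section
/- Foster's theorem: for a finite connected weighted graph G with edge weights wₑ = 1/Lₑ, ∑ over edges e of wₑ·r(e) = #V(G) − 1, where r(e) is the effective resistance between the two endpoints of e in the full graph G. -/
section Aux
variable {V : Type} [Fintype V] [DecidableEq V]

lemma lap_row_sum (w : V → V → ℝ) (hdiag : ∀ i, w i i = 0) (i : V) :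
    ∑ j, lapMatrix w i j = 0 := by
  have h : ∀ j : V, lapMatrix w i j
      = (if i = j then (∑ k, w i k) + w i j else 0) - w i j := by
    intro j
    by_cases hij : i = j <;> simp [lapMatrix, hij]
  rw [Finset.sum_congr rfl fun j _ => h j, Finset.sum_sub_distrib,
    Finset.sum_ite_eq]
  simp [hdiag]

lemma lap_mulVec (w : V → V → ℝ) (hdiag : ∀ i, w i i = 0) (x : V → ℝ) (i : V) :
    (lapMatrix w).mulVec x i = ∑ j, w i j * (x i - x j) := by
  have h : ∀ j : V, lapMatrix w i j * x j
      = (if i = j then (∑ k, w i k) * x i + w i j * x j else 0) - w i j * x j := by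
    intro j
    by_cases hij : i = j <;> simp [lapMatrix, hij] <;> ring
  rw [Matrix.mulVec, dotProduct, Finset.sum_congr rfl fun j _ => h j,
    Finset.sum_sub_distrib, Finset.sum_ite_eq]
  simp only [Finset.mem_univ, if_true, hdiag, zero_mul, add_zero]
  rw [Finset.sum_mul]
  rw [← Finset.sum_sub_distrib]
  exact Finset.sum_congr rfl fun j _ => by ring

end Aux

section Aux2
variable {V : Type} [Fintype V] [DecidableEq V]

lemma lap_quad (w : V → V → ℝ) (hsym : ∀ i j, w i j = w j i)
    (hdiag : ∀ i, w i i = 0) (x : V → ℝ) :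
    dotProduct x ((lapMatrix w).mulVec x)
      = (1/2) * ∑ i, ∑ j, w i j * (x i - x j)^2 := by
  have h1 : dotProduct x ((lapMatrix w).mulVec x)
      = ∑ i, ∑ j, w i j * (x i * (x i - x j)) := by
    rw [dotProduct]
    refine Finset.sum_congr rfl fun i _ => ?_
    rw [lap_mulVec w hdiag, Finset.mul_sum]
    exact Finset.sum_congr rfl fun j _ => by ring
  have h2 : ∑ i, ∑ j, w i j * (x i * (x i - x j))
      = ∑ i, ∑ j, w i j * (x j * (x j - x i)) := by
    rw [Finset.sum_comm]
    exact Finset.sum_congr rfl fun i _ => Finset.sum_congr rfl fun j _ => by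
      rw [hsym j i]
  have h3 : dotProduct x ((lapMatrix w).mulVec x)
      + dotProduct x ((lapMatrix w).mulVec x)
      = ∑ i, ∑ j, w i j * (x i - x j)^2 := by
    rw [h1]; nth_rewrite 2 [h2]
    rw [← Finset.sum_add_distrib]
    refine Finset.sum_congr rfl fun i _ => ?_
    rw [← Finset.sum_add_distrib]
    exact Finset.sum_congr rfl fun j _ => by ring
  linarith

lemma quad_zero_const (w : V → V → ℝ) (hsym : ∀ i j, w i j = w j i)
    (hnonneg : ∀ i j, 0 ≤ w i j) (hdiag : ∀ i, w i i = 0)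
    (hconn : (SimpleGraph.fromRel fun i j => 0 < w i j).Connected)
    (x : V → ℝ) (h : dotProduct x ((lapMatrix w).mulVec x) = 0) :
    ∀ u v, x u = x v := by
  have hq : ∑ i, ∑ j, w i j * (x i - x j)^2 = 0 := by
    have := lap_quad w hsym hdiag x
    rw [h] at this
    linarith
  have hterm : ∀ i j : V, 0 < w i j → x i = x j := by
    intro i j hw
    have hnn : ∀ i ∈ (Finset.univ : Finset V),
        0 ≤ ∑ j, w i j * (x i - x j)^2 := fun i _ =>
      Finset.sum_nonneg fun j _ => mul_nonneg (hnonneg i j) (sq_nonneg _)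
    have h1 := (Finset.sum_eq_zero_iff_of_nonneg hnn).mp hq i (Finset.mem_univ i)
    have hnn2 : ∀ j ∈ (Finset.univ : Finset V),
        0 ≤ w i j * (x i - x j)^2 := fun j _ =>
      mul_nonneg (hnonneg i j) (sq_nonneg _)
    have h2 := (Finset.sum_eq_zero_iff_of_nonneg hnn2).mp h1 j (Finset.mem_univ j)
    have : (x i - x j)^2 = 0 := by
      rcases mul_eq_zero.mp h2 with h' | h'
      · exact absurd h' (ne_of_gt hw)
      · exact h'
    have := sub_eq_zero.mp (pow_eq_zero_iff (n := 2) (by norm_num) |>.mp this)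
    exact this
  intro u v
  obtain ⟨p⟩ := hconn u v
  induction p with
  | nil => rfl
  | cons hadj p ih =>
    rw [← ih]
    rcases (SimpleGraph.fromRel_adj _ _ _).mp hadj with ⟨_, h' | h'⟩
    · exact hterm _ _ h'
    · exact (hterm _ _ h').symm

end Aux2

section Aux3
variable {V : Type} [Fintype V] [DecidableEq V]

noncomputable def Jmat (V : Type) [Fintype V] : Matrix V V ℝ :=
  Matrix.of fun _ _ => (Fintype.card V : ℝ)⁻¹

lemma A_det_unit (w : V → V → ℝ) (hsym : ∀ i j, w i j = w j i)
    (hnonneg : ∀ i j, 0 ≤ w i j) (hdiag : ∀ i, w i i = 0)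
    (hconn : (SimpleGraph.fromRel fun i j => 0 < w i j).Connected) :
    IsUnit (lapMatrix w + Jmat V).det := by
  have hne : Nonempty V := hconn.nonempty
  have hn : (Fintype.card V : ℝ) ≠ 0 := by
    exact_mod_cast Fintype.card_ne_zero
  have hker : ∀ x : V → ℝ, (lapMatrix w + Jmat V).mulVec x = 0 → x = 0 := by
    intro x hx
    have hd : dotProduct x ((lapMatrix w + Jmat V).mulVec x) = 0 := by
      rw [hx]; simp
    rw [Matrix.add_mulVec, dotProduct_add] at hd
    have hJv : (Jmat V).mulVec x = fun _ => (Fintype.card V : ℝ)⁻¹ * ∑ j, x j := by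
      funext i
      simp [Jmat, Matrix.mulVec, dotProduct, Finset.mul_sum]
    have hJ : dotProduct x ((Jmat V).mulVec x)
        = (Fintype.card V : ℝ)⁻¹ * (∑ i, x i)^2 := by
      rw [hJv, dotProduct, ← Finset.sum_mul]
      ring
    have hLnn : 0 ≤ dotProduct x ((lapMatrix w).mulVec x) := by
      rw [lap_quad w hsym hdiag]
      have : 0 ≤ ∑ i, ∑ j, w i j * (x i - x j)^2 :=
        Finset.sum_nonneg fun i _ => Finset.sum_nonneg fun j _ =>
          mul_nonneg (hnonneg i j) (sq_nonneg _)
      linarith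
    have hJnn : 0 ≤ dotProduct x ((Jmat V).mulVec x) := by
      rw [hJ]
      positivity
    have hL0 : dotProduct x ((lapMatrix w).mulVec x) = 0 := by linarith
    have hJ0 : dotProduct x ((Jmat V).mulVec x) = 0 := by linarith
    have hconst := quad_zero_const w hsym hnonneg hdiag hconn x hL0
    have hsum : ∑ i, x i = 0 := by
      rw [hJ] at hJ0
      rcases mul_eq_zero.mp hJ0 with h' | h'
      · exact absurd h' (inv_ne_zero hn)
      · exact pow_eq_zero_iff (by norm_num) |>.mp h'
    obtain ⟨v0⟩ := hne
    have hsv : ∑ i, x i = (Fintype.card V : ℝ) * x v0 := by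
      rw [Finset.sum_congr rfl fun i _ => hconst i v0]
      rw [Finset.sum_const, Finset.card_univ, nsmul_eq_mul]
    funext v
    rw [hconst v v0]
    have : x v0 = 0 := by
      rw [hsv] at hsum
      rcases mul_eq_zero.mp hsum with h' | h'
      · exact absurd h' hn
      · exact h'
    exact this
  rw [isUnit_iff_ne_zero]
  intro hdet
  obtain ⟨v, hv, hv0⟩ := (Matrix.exists_mulVec_eq_zero_iff).mpr hdet
  exact hv (hker v hv0)

end Aux3

section Aux4
variable {V : Type} [Fintype V] [DecidableEq V]

lemma mulVec_dirac (M : Matrix V V ℝ) (a b i : V) :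
    M.mulVec (dirac a b) i = M i a - M i b := by
  simp [Matrix.mulVec, dotProduct, dirac, mul_sub, mul_ite,
    Finset.sum_sub_distrib, Finset.sum_ite_eq']

lemma doubling (w : V → V → ℝ) (hsym : ∀ i j, w i j = w j i)
    (E : Finset (V × V))
    (hE : ∀ i j : V, 0 < w i j →
      ((i, j) ∈ E ∧ (j, i) ∉ E) ∨ ((j, i) ∈ E ∧ (i, j) ∉ E))
    (hEw : ∀ e ∈ E, 0 < w e.1 e.2)
    (ϕ : V → V → ℝ) (hϕsym : ∀ i j, ϕ i j = ϕ j i)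
    (hϕ0 : ∀ i j, ¬ 0 < w i j → ϕ i j = 0) :
    2 * ∑ e ∈ E, ϕ e.1 e.2 = ∑ i, ∑ j, ϕ i j := by
  classical
  set E' := E.image Prod.swap with hE'
  have hswap_sum : ∑ e ∈ E', ϕ e.1 e.2 = ∑ e ∈ E, ϕ e.1 e.2 := by
    rw [hE', Finset.sum_image (fun x _ y _ h => Prod.swap_injective h)]
    exact Finset.sum_congr rfl fun e _ => hϕsym e.2 e.1
  have hdisj : Disjoint E E' := by
    rw [Finset.disjoint_left]
    intro p hp hp'
    obtain ⟨q, hq, hqp⟩ := Finset.mem_image.mp hp'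
    have hqs : q = p.swap := by rw [← hqp]; simp
    have hq' : (p.2, p.1) ∈ E := by rwa [hqs, Prod.swap] at hq
    have hpw := hEw p hp
    rcases hE p.1 p.2 hpw with ⟨h1, h2⟩ | ⟨h1, h2⟩
    · exact h2 hq'
    · exact h2 (by simpa using hp)
  have hunion : E ∪ E' = Finset.univ.filter (fun p : V × V => 0 < w p.1 p.2) := by
    ext p
    simp only [Finset.mem_union, Finset.mem_filter, Finset.mem_univ, true_and]
    constructor
    · rintro (hp | hp)
      · exact hEw p hp
      · obtain ⟨q, hq, hqp⟩ := Finset.mem_image.mp hp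
        have := hEw q hq
        rw [← hqp]
        simpa [hsym q.1 q.2] using this
    · intro hpw
      rcases hE p.1 p.2 hpw with ⟨h1, _⟩ | ⟨h1, _⟩
      · left; simpa using h1
      · right
        exact Finset.mem_image.mpr ⟨(p.2, p.1), h1, by simp⟩
  have hsum_univ : ∑ i, ∑ j, ϕ i j = ∑ p : V × V, ϕ p.1 p.2 := by
    rw [Fintype.sum_prod_type]
  rw [hsum_univ]
  rw [← Finset.sum_filter_add_sum_filter_not Finset.univ
    (fun p : V × V => 0 < w p.1 p.2) (fun p => ϕ p.1 p.2)]
  have h0 : ∑ p ∈ Finset.univ.filter (fun p : V × V => ¬ 0 < w p.1 p.2),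
      ϕ p.1 p.2 = 0 :=
    Finset.sum_eq_zero fun p hp => hϕ0 p.1 p.2 (Finset.mem_filter.mp hp).2
  rw [h0, add_zero, ← hunion, Finset.sum_union hdisj, hswap_sum]
  ring

end Aux4

theorem foster_theorem
    {V : Type} [Fintype V] [DecidableEq V]
    (w : V → V → ℝ)
    (hsym : ∀ i j, w i j = w j i)
    (hnonneg : ∀ i j, 0 ≤ w i j)
    (hdiag : ∀ i, w i i = 0)
    (hconn : (SimpleGraph.fromRel fun i j => 0 < w i j).Connected)
    (E : Finset (V × V))
    (hE : ∀ i j : V, 0 < w i j →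
      ((i, j) ∈ E ∧ (j, i) ∉ E) ∨ ((j, i) ∈ E ∧ (i, j) ∉ E))
    (hEw : ∀ e ∈ E, 0 < w e.1 e.2)
    (f : V × V → V → ℝ)
    (hf : ∀ e ∈ E, (lapMatrix w).mulVec (f e) = dirac e.1 e.2) :
    ∑ e ∈ E, w e.1 e.2 * (f e e.1 - f e e.2)
      = (Fintype.card V : ℝ) - 1 := by
  classical
  have hne : Nonempty V := hconn.nonempty
  have hn : (Fintype.card V : ℝ) ≠ 0 := by exact_mod_cast Fintype.card_ne_zero
  set A := lapMatrix w + Jmat V with hAdef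
  have hdet := A_det_unit w hsym hnonneg hdiag hconn
  set P := A⁻¹ with hPdef
  have hPA : P * A = 1 := Matrix.nonsing_inv_mul A hdet
  have hAP : A * P = 1 := Matrix.mul_nonsing_inv A hdet
  have hLsymm : ∀ i j, lapMatrix w i j = lapMatrix w j i := by
    intro i j
    by_cases hij : i = j
    · rw [hij]
    · simp [lapMatrix, hij, Ne.symm hij, hsym i j]
  have hcol : ∀ j, ∑ i, lapMatrix w i j = 0 := by
    intro j
    rw [Finset.sum_congr rfl fun i _ => hLsymm i j]
    exact lap_row_sum w hdiag j
  -- P preserves the all-ones vector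
  have hA1 : A.mulVec (fun _ => 1) = fun _ => 1 := by
    funext i
    rw [hAdef, Matrix.add_mulVec]
    have h1 : (lapMatrix w).mulVec (fun _ => 1) i = 0 := by
      rw [lap_mulVec w hdiag]
      simp
    have h2 : (Jmat V).mulVec (fun _ => 1) i = 1 := by
      simp only [Jmat, Matrix.mulVec, dotProduct, Matrix.of_apply, mul_one]
      rw [Finset.sum_const, Finset.card_univ, nsmul_eq_mul, mul_inv_cancel₀ hn]
    simp only [Pi.add_apply, h1, h2, zero_add]
  have hones : P.mulVec (fun _ => 1) = fun _ => 1 := by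
    conv_lhs => rw [← hA1]
    rw [Matrix.mulVec_mulVec, hPA, Matrix.one_mulVec]
  -- Step E : the resistance is computed by P
  have key1 : ∀ a b : V, ∀ g : V → ℝ, (lapMatrix w).mulVec g = dirac a b →
      g a - g b = (P.mulVec (dirac a b)) a - (P.mulVec (dirac a b)) b := by
    intro a b g hg
    set d := dirac a b with hd
    set y := P.mulVec d with hy
    have hsumd : ∑ v, d v = 0 := by
      by_cases hab : a = b
      · subst hab; simp [hd, dirac]
      · simp [hd, dirac, Finset.sum_sub_distrib, Finset.sum_ite_eq']
    have hAy : A.mulVec y = d := by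
      rw [hy, Matrix.mulVec_mulVec, hAP, Matrix.one_mulVec]
    have hsumLy : ∑ i, (lapMatrix w).mulVec y i = 0 := by
      simp only [Matrix.mulVec, dotProduct]
      rw [Finset.sum_comm]
      rw [Finset.sum_congr rfl fun j _ => by
        rw [← Finset.sum_mul, hcol j, zero_mul]]
      simp
    have hJy : (Jmat V).mulVec y = 0 := by
      have hsAy : ∑ i, A.mulVec y i = 0 := by rw [hAy]; exact hsumd
      have hsplit : ∀ i, A.mulVec y i
          = (lapMatrix w).mulVec y i + (Jmat V).mulVec y i := by
        intro i; rw [hAdef, Matrix.add_mulVec]; rfl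
      have hsJy : ∑ i, (Jmat V).mulVec y i = 0 := by
        have := hsAy
        rw [Finset.sum_congr rfl fun i _ => hsplit i,
          Finset.sum_add_distrib, hsumLy, zero_add] at this
        exact this
      have hJyv : ∀ i, (Jmat V).mulVec y i = (Fintype.card V : ℝ)⁻¹ * ∑ j, y j := by
        intro i
        simp [Jmat, Matrix.mulVec, dotProduct, Finset.mul_sum]
      have hsy : ∑ j, y j = 0 := by
        rw [Finset.sum_congr rfl fun i _ => hJyv i, Finset.sum_const,
          Finset.card_univ, nsmul_eq_mul] at hsJy
        field_simp at hsJy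
        exact hsJy
      funext i
      rw [hJyv i, hsy, mul_zero]
      rfl
    have hLy : (lapMatrix w).mulVec y = d := by
      have : A.mulVec y = (lapMatrix w).mulVec y + (Jmat V).mulVec y := by
        rw [hAdef, Matrix.add_mulVec]
      rw [this, hJy, add_zero] at hAy
      exact hAy
    have hz : (lapMatrix w).mulVec (g - y) = 0 := by
      rw [Matrix.mulVec_sub, hg, hLy, sub_self]
    have hconst := quad_zero_const w hsym hnonneg hdiag hconn (g - y)
      (by rw [hz]; simp)
    have h1 := hconst a b
    simp only [Pi.sub_apply] at h1
    linarith
  -- replace f by canonical solutions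
  have hstep : ∀ e ∈ E, w e.1 e.2 * (f e e.1 - f e e.2)
      = w e.1 e.2 * (P e.1 e.1 - P e.1 e.2 - P e.2 e.1 + P e.2 e.2) := by
    intro e he
    rw [key1 e.1 e.2 (f e) (hf e he), mulVec_dirac, mulVec_dirac]
    ring_nf
  rw [Finset.sum_congr rfl hstep]
  -- doubling and final algebra
  set ϕ : V → V → ℝ := fun i j => w i j * (P i i - P i j - P j i + P j j) with hϕ
  have hϕsym : ∀ i j, ϕ i j = ϕ j i := by
    intro i j; simp only [hϕ, hsym i j]; ring
  have hϕ0 : ∀ i j, ¬ 0 < w i j → ϕ i j = 0 := by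
    intro i j h
    have : w i j = 0 := le_antisymm (not_lt.mp h) (hnonneg i j)
    simp [hϕ, this]
  have hdouble := doubling w hsym E hE hEw ϕ hϕsym hϕ0
  have hfinal : ∑ i, ∑ j, ϕ i j = 2 * ((Fintype.card V : ℝ) - 1) := by
    set S : ℝ := ∑ i, ∑ j, lapMatrix w i j * P i j with hSdef
    -- the double sum equals 2 * S
    have hT2 : ∑ i, ∑ j, w i j * P j j = ∑ i, ∑ j, w i j * P i i := by
      rw [Finset.sum_comm]
      exact Finset.sum_congr rfl fun i _ => Finset.sum_congr rfl fun j _ => by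
        rw [hsym j i]
    have hT4 : ∑ i, ∑ j, w i j * P j i = ∑ i, ∑ j, w i j * P i j := by
      rw [Finset.sum_comm]
      exact Finset.sum_congr rfl fun i _ => Finset.sum_congr rfl fun j _ => by
        rw [hsym j i]
    have hS1 : S = ∑ i, ∑ j, w i j * P i i - ∑ i, ∑ j, w i j * P i j := by
      rw [hSdef, ← Finset.sum_sub_distrib]
      refine Finset.sum_congr rfl fun i _ => ?_
      have hrow : ∀ j : V, lapMatrix w i j * P i j
          = (if i = j then (∑ k, w i k) * P i i + w i j * P i j else 0)
            - w i j * P i j := by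
        intro j
        by_cases hij : i = j <;> simp [lapMatrix, hij] <;> ring
      rw [Finset.sum_congr rfl fun j _ => hrow j, Finset.sum_sub_distrib,
        Finset.sum_ite_eq, ← Finset.sum_sub_distrib]
      simp only [Finset.mem_univ, if_true, hdiag, zero_mul, add_zero]
      rw [Finset.sum_sub_distrib, Finset.sum_mul]
    have hT : ∑ i, ∑ j, ϕ i j = 2 * S := by
      have : ∑ i, ∑ j, ϕ i j
          = ∑ i, ∑ j, (w i j * P i i + w i j * P j j
            - w i j * P i j - w i j * P j i) := by
        refine Finset.sum_congr rfl fun i _ => Finset.sum_congr rfl fun j _ => ?_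
        simp only [hϕ]; ring
      rw [this]
      simp only [Finset.sum_sub_distrib, Finset.sum_add_distrib]
      rw [hT2, hT4, hS1]
      ring
    -- S = card - 1
    have hAe : ∀ i j : V, lapMatrix w i j = A j i - (Fintype.card V : ℝ)⁻¹ := by
      intro i j
      rw [hLsymm i j, hAdef]
      simp [Jmat]
    have hPsum : ∑ i, ∑ j, P i j = (Fintype.card V : ℝ) := by
      have : ∀ i : V, ∑ j, P i j = 1 := by
        intro i
        have := congrFun hones i
        simpa [Matrix.mulVec, dotProduct] using this
      rw [Finset.sum_congr rfl fun i _ => this i, Finset.sum_const,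
        Finset.card_univ, nsmul_eq_mul, mul_one]
    have hAPsum : ∑ i, ∑ j, A j i * P i j = (Fintype.card V : ℝ) := by
      rw [Finset.sum_comm]
      have : ∀ j : V, ∑ i, A j i * P i j = 1 := by
        intro j
        have h := congrFun (congrFun hAP j) j
        rw [Matrix.mul_apply] at h
        rw [h, Matrix.one_apply_eq]
      rw [Finset.sum_congr rfl fun j _ => this j, Finset.sum_const,
        Finset.card_univ, nsmul_eq_mul, mul_one]
    have hSval : S = (Fintype.card V : ℝ) - 1 := by
      have : S = ∑ i, ∑ j, (A j i * P i j - (Fintype.card V : ℝ)⁻¹ * P i j) := by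
        rw [hSdef]
        refine Finset.sum_congr rfl fun i _ => Finset.sum_congr rfl fun j _ => ?_
        rw [hAe i j]; ring
      rw [this]
      simp only [Finset.sum_sub_distrib]
      rw [hAPsum]
      have : ∑ i, ∑ j, (Fintype.card V : ℝ)⁻¹ * P i j
          = (Fintype.card V : ℝ)⁻¹ * ∑ i, ∑ j, P i j := by
        rw [Finset.mul_sum]
        exact Finset.sum_congr rfl fun i _ => (Finset.mul_sum _ _ _).symm
      rw [this, hPsum, inv_mul_cancel₀ hn]
    rw [hT, hSval]
  have : (2 : ℝ) * ∑ e ∈ E, ϕ e.1 e.2 = 2 * ((Fintype.card V : ℝ) - 1) := by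
    rw [hdouble, hfinal]
  have h2 : ∑ e ∈ E, ϕ e.1 e.2 = (Fintype.card V : ℝ) - 1 := by linarith
  exact h2
end
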